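/- arXiv:1112.5777 — 11 statements merged into one kernel-verified Lean document; each statement's English description precedes it below -/
import Mathlib

section
/- For any real α > ⌊d/2⌋ - 1/2 and any 0 ≤ i ≤ ⌊d/2⌋ - 1, the polynomial M_i(n) = Π_{j=0}^{d-2i-1}(n + 1/2 + i + j) + Π_{j=0}^{d-2i-1}(n − 1/2 − i − j) satisfies M_i(α) > 0. -/
open Finset

theorem Finset.prod_lt_prod_of_nonempty_of_nonneg {ι : Type*} {s : Finset ι} {f g : ι → ℝ}
    (hs : s.Nonempty) (hf : ∀ j ∈ s, 0 ≤ f j) (hfg : ∀ j ∈ s, f j < g j) :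
    ∏ j ∈ s, f j < ∏ j ∈ s, g j := by
  induction hs using Finset.Nonempty.cons_induction with
  | singleton j => simpa using hfg j (mem_singleton_self j)
  | cons j s _ _ ih =>
    simp only [mem_cons, forall_eq_or_imp] at hf hfg
    rw [prod_cons, prod_cons]
    exact mul_lt_mul'' hfg.1 (ih hf.2 hfg.2) hf.1 (prod_nonneg hf.2)

/-- Each factor `a - c j` is smaller in absolute value than `a + c j`, so the second product
cannot cancel the first. -/
theorem prod_add_add_prod_sub_pos {ι : Type*} (s : Finset ι) {a : ℝ} (ha : 0 < a) {c : ι → ℝ}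
    (hc : ∀ j ∈ s, 0 < c j) :
    0 < ∏ j ∈ s, (a + c j) + ∏ j ∈ s, (a - c j) := by
  rcases s.eq_empty_or_nonempty with rfl | hs
  · norm_num
  have hlt : ∏ j ∈ s, |a - c j| < ∏ j ∈ s, (a + c j) :=
    prod_lt_prod_of_nonempty_of_nonneg hs (fun _ _ => abs_nonneg _)
      fun j hj => abs_lt.2 ⟨by linarith [hc j hj], by linarith [hc j hj]⟩
  rw [← abs_prod] at hlt
  linarith [neg_abs_le (∏ j ∈ s, (a - c j))]

theorem stmt3_general (d : ℕ) (i : ℕ) (hi : i + 1 ≤ d / 2)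
    (α : ℝ) (hα : ((d / 2 : ℕ) : ℝ) - 1 / 2 < α) :
    0 < (∏ j ∈ Finset.range (d - 2 * i), (α + 1 / 2 + (i : ℝ) + (j : ℝ))) +
          ∏ j ∈ Finset.range (d - 2 * i), (α - 1 / 2 - (i : ℝ) - (j : ℝ)) := by
  have hα_pos : 0 < α := by
    have : (1 : ℝ) ≤ ((d / 2 : ℕ) : ℝ) := by exact_mod_cast (by omega : 1 ≤ d / 2)
    linarith
  simpa only [add_assoc, sub_sub] using
    prod_add_add_prod_sub_pos (range (d - 2 * i)) hα_pos (c := fun j => 1 / 2 + (i : ℝ) + j)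
      fun j _ => by positivity

theorem stmt3 (d : ℕ) (hd : 0 < d) (i : ℕ) (hi : i + 1 ≤ d / 2)
    (α : ℝ) (hα : ((d / 2 : ℕ) : ℝ) - 1 / 2 < α) :
    0 < (∏ j ∈ Finset.range (d - 2 * i), (α + 1 / 2 + (i : ℝ) + (j : ℝ))) +
          ∏ j ∈ Finset.range (d - 2 * i), (α - 1 / 2 - (i : ℝ) - (j : ℝ)) :=
  stmt3_general d i hi α hα
end

section
/- The set of complex roots of all polynomials f(n) = binom(n+2,2) + b*binom(n+1,2) + binom(n,2) as b ranges over nonnegative reals, together with the roots of binom(n+1,2), is exactly [-1,0] ∪ { α ∈ ℂ : Re(α) = -1/2, 0 < |Im(α)| ≤ √3/2 }. -/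
/-!
Every member of the family is `((b + 2) z + 2) / 2` with `z = α² + α`, and `binom(α + 1, 2) = z / 2`.
So `α` is a root exactly when `z = -2 / (b + 2)` for some `b ≥ 0` or `z = 0`, i.e. when `α² + α`
is a real number in `[-1, 0]`. Writing `α = x + iy`, the imaginary part `y (2x + 1)` of `α² + α`
vanishes iff `y = 0` (then `x² + x ∈ [-1, 0]` means `x ∈ [-1, 0]`) or `x = -1/2` (then
`α² + α = -1/4 - y²`, which lies in `[-1, 0]` iff `y² ≤ 3/4`).
-/

/-- Polynomial binomial coefficient `binom(x, k) = x(x-1)⋯(x-k+1)/k!` in a complex variable. -/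
noncomputable def cbinom (x : ℂ) (k : ℕ) : ℂ :=
  (∏ j ∈ Finset.range k, (x - (j : ℂ))) / (k.factorial : ℂ)

open Set

lemma cbinom_two (x : ℂ) : cbinom x 2 = x * (x - 1) / 2 := by
  simp [cbinom, Finset.prod_range_succ, Nat.factorial]

lemma cbinom_family_eq (α b : ℂ) :
    cbinom (α + 2) 2 + b * cbinom (α + 1) 2 + cbinom α 2 = ((b + 2) * (α ^ 2 + α) + 2) / 2 := by
  simp only [cbinom_two]
  ring

lemma exists_nonneg_root_or_eq_zero_iff (z : ℂ) :
    ((∃ b : ℝ, 0 ≤ b ∧ ((b : ℂ) + 2) * z + 2 = 0) ∨ z = 0) ↔ ∃ r ∈ Icc (-1 : ℝ) 0, z = r := by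
  constructor
  · rintro (⟨b, hb, hz⟩ | rfl)
    · have hb2 : (0 : ℝ) < b + 2 := by linarith
      refine ⟨-2 / (b + 2), ⟨?_, ?_⟩, ?_⟩
      · rw [le_div_iff₀ hb2]; linarith
      · exact div_nonpos_of_nonpos_of_nonneg (by norm_num) hb2.le
      · have hb2' : (b : ℂ) + 2 ≠ 0 := by exact_mod_cast hb2.ne'
        push_cast
        field_simp
        linear_combination hz
    · exact ⟨0, ⟨by norm_num, le_rfl⟩, by simp⟩
  · rintro ⟨r, ⟨hr₁, hr₂⟩, rfl⟩
    rcases hr₂.lt_or_eq with hr | rfl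
    · left
      refine ⟨-2 / r - 2, ?_, ?_⟩
      · have : 2 ≤ -2 / r := by rw [le_div_iff_of_neg hr]; linarith
        linarith
      · have hr' : (r : ℂ) ≠ 0 := by exact_mod_cast hr.ne
        push_cast
        field_simp
        ring
    · simp

lemma sq_add_self_mem_Icc_iff (α : ℂ) :
    (∃ r ∈ Icc (-1 : ℝ) 0, α ^ 2 + α = r) ↔
      (α.im = 0 ∧ -1 ≤ α.re ∧ α.re ≤ 0) ∨
        (α.re = -(1 / 2) ∧ 0 < |α.im| ∧ |α.im| ≤ Real.sqrt 3 / 2) := by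
  have hre : (α ^ 2 + α).re = α.re ^ 2 - α.im ^ 2 + α.re := by simp [pow_two]
  have him : (α ^ 2 + α).im = α.im * (2 * α.re + 1) := by simp [pow_two]; ring
  have hsqrt : Real.sqrt 3 / 2 = Real.sqrt (3 / 4) := by
    rw [Real.sqrt_div' _ (by norm_num : (0 : ℝ) ≤ 4),
      show (4 : ℝ) = 2 ^ 2 by norm_num, Real.sqrt_sq (by norm_num)]
  rw [hsqrt, Real.le_sqrt (abs_nonneg _) (by norm_num), sq_abs]
  constructor
  · rintro ⟨r, ⟨hr₁, hr₂⟩, hα⟩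
    rw [hα, Complex.ofReal_re] at hre
    rw [hα, Complex.ofReal_im, eq_comm] at him
    by_cases hy : α.im = 0
    · left
      rw [hy] at hre
      exact ⟨hy, by nlinarith, by nlinarith⟩
    · right
      have hx : α.re = -(1 / 2) := by
        have := (mul_eq_zero.mp him).resolve_left hy
        linarith
      rw [hx] at hre
      exact ⟨hx, abs_pos.mpr hy, by linarith⟩
  · rintro (⟨hy, hx₁, hx₂⟩ | ⟨hx, -, hy⟩)
    · refine ⟨α.re ^ 2 + α.re, ⟨by nlinarith, by nlinarith⟩, Complex.ext ?_ ?_⟩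
      · rw [Complex.ofReal_re, hre, hy]; ring
      · rw [Complex.ofReal_im, him, hy, zero_mul]
    · refine ⟨-(1 / 4) - α.im ^ 2, ⟨by linarith, by nlinarith⟩, Complex.ext ?_ ?_⟩
      · rw [Complex.ofReal_re, hre, hx]; ring
      · rw [Complex.ofReal_im, him, hx]; ring

lemma cbinom_family_root_iff (α : ℂ) :
    ((∃ b : ℝ, 0 ≤ b ∧ cbinom (α + 2) 2 + (b : ℂ) * cbinom (α + 1) 2 + cbinom α 2 = 0) ∨
        cbinom (α + 1) 2 = 0) ↔ ∃ r ∈ Icc (-1 : ℝ) 0, α ^ 2 + α = r := by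
  rw [← exists_nonneg_root_or_eq_zero_iff]
  simp_rw [cbinom_family_eq, cbinom_two, add_sub_cancel_right, div_eq_zero_iff, two_ne_zero,
    or_false, show (α + 1) * α = α ^ 2 + α by ring]

theorem stmt5 :
    {α : ℂ | (∃ b : ℝ, 0 ≤ b ∧
          cbinom (α + 2) 2 + (b : ℂ) * cbinom (α + 1) 2 + cbinom α 2 = 0) ∨
        cbinom (α + 1) 2 = 0} =
      {α : ℂ | α.im = 0 ∧ -1 ≤ α.re ∧ α.re ≤ 0} ∪
        {α : ℂ | α.re = -(1 / 2) ∧ 0 < |α.im| ∧ |α.im| ≤ Real.sqrt 3 / 2} := by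
  ext α
  exact (cbinom_family_root_iff α).trans (sq_add_self_mem_Icc_iff α)
end

section
/- For b ≥ 0, the polynomial f(n) = binom(n+3,3) + b*binom(n+2,3) + b*binom(n+1,3) + binom(n,3) satisfies 6·f(n) = (2n+1)((b+1)n² + (b+1)n + 6), and its roots are -1/2 and -1/2 ± (1/2)√((b−23)/(b+1)). In particular, all roots α satisfy -1 < Re(α) < 0 or Re(α) = -1/2 with |Im(α)| ≤ √23/2. -/
/-!
Clearing denominators, `6 f(n) = (2n+1)((b+1)n² + (b+1)n + 6)`. Completing the square, the
quadratic factor has roots `-1/2 ± s/2` with `s² = (b-23)/(b+1)`, a real number in `[-23, 1)`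
when `b ≥ 0`. If `s` is real then `|s| < 1` and the root lies strictly between `-1` and `0`;
otherwise `s` is purely imaginary with `|s| ≤ √23`, so the root lies on the line `Re = -1/2`.
-/

open Complex

lemma cbinom_three (x : ℂ) : cbinom x 3 = x * (x - 1) * (x - 2) / 6 := by
  simp only [cbinom, Finset.prod_range_succ, Finset.prod_range_zero, Nat.factorial]
  push_cast
  ring

lemma six_mul_binom_sum (b n : ℂ) :
    6 * (cbinom (n + 3) 3 + b * cbinom (n + 2) 3 + b * cbinom (n + 1) 3 + cbinom n 3) =
      (2 * n + 1) * ((b + 1) * n ^ 2 + (b + 1) * n + 6) := by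
  simp only [cbinom_three]
  ring

lemma quadratic_eq_mul_sub_mul_sub {c s : ℂ} (hs : c * s ^ 2 = c - 24) (x : ℂ) :
    c * x ^ 2 + c * x + 6 = c * (x - (-(1 / 2) + 1 / 2 * s)) * (x - (-(1 / 2) - 1 / 2 * s)) := by
  linear_combination (1 / 4 : ℂ) * hs

lemma binom_sum_eq_zero_iff {b s : ℂ} (hb : b + 1 ≠ 0) (hs : (b + 1) * s ^ 2 = b - 23)
    (α : ℂ) :
    cbinom (α + 3) 3 + b * cbinom (α + 2) 3 + b * cbinom (α + 1) 3 + cbinom α 3 = 0 ↔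
      α = -(1 / 2) ∨ α = -(1 / 2) + 1 / 2 * s ∨ α = -(1 / 2) - 1 / 2 * s := by
  have hlin : 2 * α + 1 = 0 ↔ α = -(1 / 2) := by
    constructor
    · intro h; linear_combination h / 2
    · intro h; linear_combination 2 * h
  rw [← mul_eq_zero_iff_left (by norm_num : (6 : ℂ) ≠ 0), six_mul_binom_sum,
    quadratic_eq_mul_sub_mul_sub (s := s) (by linear_combination hs),
    mul_eq_zero, mul_eq_zero, mul_eq_zero, hlin, sub_eq_zero, sub_eq_zero]
  simp only [hb, false_or]

lemma re_im_of_sq_eq_ofReal {s : ℂ} {r : ℝ} (h : s ^ 2 = r) :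
    (s.im = 0 ∧ s.re ^ 2 = r) ∨ (s.re = 0 ∧ s.im ^ 2 = -r) := by
  have hre : s.re ^ 2 - s.im ^ 2 = r := by simpa [sq] using congrArg re h
  have him : s.re * s.im = 0 := by
    have := congrArg im h
    simp only [sq, mul_im, ofReal_im] at this
    linarith
  rcases mul_eq_zero.1 him with h0 | h0
  · right; exact ⟨h0, by rw [h0] at hre; linarith⟩
  · left; exact ⟨h0, by rw [h0] at hre; linarith⟩

lemma root_location_of_sq_eq_ofReal {r : ℝ} (hr : r < 1) (hr' : -23 ≤ r) {s : ℂ}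
    (hs : s ^ 2 = r) :
    (-1 < (-(1 / 2) + 1 / 2 * s).re ∧ (-(1 / 2) + 1 / 2 * s).re < 0) ∨
      ((-(1 / 2) + 1 / 2 * s).re = -(1 / 2) ∧
        |(-(1 / 2) + 1 / 2 * s).im| ≤ Real.sqrt 23 / 2) := by
  have hre : (-(1 / 2) + 1 / 2 * s).re = -(1 / 2) + s.re / 2 := by simp [mul_re, div_eq_inv_mul]
  have him : (-(1 / 2) + 1 / 2 * s).im = s.im / 2 := by simp [mul_im, div_eq_inv_mul]
  rw [hre, him]
  rcases re_im_of_sq_eq_ofReal hs with ⟨-, hsq⟩ | ⟨h0, hsq⟩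
  · left
    have : |s.re| < 1 := by rw [← sq_lt_one_iff_abs_lt_one]; linarith
    constructor <;> linarith [abs_lt.1 this]
  · right
    refine ⟨by rw [h0]; ring, ?_⟩
    have : |s.im| ≤ Real.sqrt 23 := Real.abs_le_sqrt (by linarith)
    rw [abs_div, abs_two]
    linarith

lemma discriminant_bounds {b : ℝ} (hb : 0 ≤ b) :
    (b - 23) / (b + 1) < 1 ∧ -23 ≤ (b - 23) / (b + 1) := by
  have hb1 : 0 < b + 1 := by linarith
  constructor
  · rw [div_lt_one hb1]; linarith
  · rw [le_div_iff₀ hb1]; linarith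

theorem stmt6 (b : ℝ) (hb : 0 ≤ b) :
    (∀ n : ℂ,
        6 * (cbinom (n + 3) 3 + (b : ℂ) * cbinom (n + 2) 3 + (b : ℂ) * cbinom (n + 1) 3 +
            cbinom n 3) =
          (2 * n + 1) * (((b : ℂ) + 1) * n ^ 2 + ((b : ℂ) + 1) * n + 6)) ∧
      (∀ α : ℂ,
        cbinom (α + 3) 3 + (b : ℂ) * cbinom (α + 2) 3 + (b : ℂ) * cbinom (α + 1) 3 +
            cbinom α 3 = 0 ↔
          α = -(1 / 2) ∨
            α = -(1 / 2) + (1 / 2) * (((b - 23) / (b + 1) : ℝ) : ℂ) ^ ((1 : ℂ) / 2) ∨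
              α = -(1 / 2) - (1 / 2) * (((b - 23) / (b + 1) : ℝ) : ℂ) ^ ((1 : ℂ) / 2)) ∧
        (∀ α : ℂ,
          cbinom (α + 3) 3 + (b : ℂ) * cbinom (α + 2) 3 + (b : ℂ) * cbinom (α + 1) 3 +
              cbinom α 3 = 0 →
            (-1 < α.re ∧ α.re < 0) ∨
              (α.re = -(1 / 2) ∧ |α.im| ≤ Real.sqrt 23 / 2)) := by
  have hb1 : (b : ℂ) + 1 ≠ 0 := by exact_mod_cast (by linarith : b + 1 ≠ 0)
  set s : ℂ := (((b - 23) / (b + 1) : ℝ) : ℂ) ^ ((1 : ℂ) / 2)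
  have hs : s ^ 2 = (((b - 23) / (b + 1) : ℝ) : ℂ) := by simp [s]
  have hbs : ((b : ℂ) + 1) * s ^ 2 = b - 23 := by
    rw [hs]; push_cast; field_simp
  have hroots := binom_sum_eq_zero_iff hb1 hbs
  refine ⟨six_mul_binom_sum b, hroots, fun α hα => ?_⟩
  obtain ⟨hr, hr'⟩ := discriminant_bounds hb
  rcases (hroots α).1 hα with rfl | rfl | rfl
  · left; norm_num
  · exact root_location_of_sq_eq_ofReal hr hr' hs
  · rw [show -(1 / 2) - 1 / 2 * s = -(1 / 2) + 1 / 2 * -s by ring]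
    exact root_location_of_sq_eq_ofReal hr hr' (by rw [neg_sq, hs])
end

section
/- Every complex root α of an SSNN polynomial of degree 4 satisfies -2 ≤ Re(α) ≤ 1. -/
theorem re_sq_le_of_biquadratic_eq_zero {A B C r : ℝ} (hA : 0 < A) (hr : 0 ≤ r)
    (hpos : ∀ u : ℝ, r < u → 0 < A * u ^ 2 + B * u + C)
    (hvertex : 0 ≤ 4 * A * r + B) (hdisc : 4 * A * C ≤ (4 * A * r + B) ^ 2)
    {z : ℂ} (hz : (A : ℂ) * z ^ 4 + B * z ^ 2 + C = 0) : z.re ^ 2 ≤ r := by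
  by_contra! hrz
  set x := z.re
  set y := z.im
  have hre : A * ((x ^ 2 - y ^ 2) ^ 2 - (2 * x * y) ^ 2) + B * (x ^ 2 - y ^ 2) + C = 0 := by
    have h := congrArg Complex.re hz
    simp only [pow_succ, pow_zero, one_mul, Complex.add_re, Complex.mul_re, Complex.ofReal_re,
      Complex.mul_im, Complex.ofReal_im, zero_mul, sub_zero, Complex.zero_re] at h
    linear_combination h
  have him : 2 * x * y * (2 * A * (x ^ 2 - y ^ 2) + B) = 0 := by
    have h := congrArg Complex.im hz
    simp only [pow_succ, pow_zero, one_mul, Complex.add_im, Complex.mul_re, Complex.ofReal_re,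
      Complex.mul_im, Complex.ofReal_im, zero_mul, add_zero, Complex.zero_im] at h
    linear_combination h
  rcases mul_eq_zero.1 him with hxy | hvert
  · have hx : x ≠ 0 := by rintro hx; simp only [hx] at hrz; linarith
    have hy : y = 0 := by simpa [hx] using hxy
    have hu := hpos _ hrz
    rw [hy] at hre
    nlinarith
  · have hC : C = A * (x ^ 2 + y ^ 2) ^ 2 := by linear_combination hre - (x ^ 2 - y ^ 2) * hvert
    have hB : 4 * A * x ^ 2 + B = 2 * A * (x ^ 2 + y ^ 2) := by linear_combination hvert
    have hlt : (4 * A * r + B) ^ 2 < (4 * A * x ^ 2 + B) ^ 2 :=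
      pow_lt_pow_left₀ (by nlinarith) hvertex two_ne_zero
    rw [hB] at hlt
    rw [hC] at hdisc
    nlinarith

theorem sum_mul_cbinom_eq_biquadratic (δ : ℕ → ℝ) (h3 : δ 3 = δ 1) (h4 : δ 4 = δ 0) (α : ℂ) :
    24 * ∑ i ∈ Finset.range 5, (δ i : ℂ) * cbinom (α + 4 - i) 4 =
      ((2 * δ 0 + 2 * δ 1 + δ 2 : ℝ) : ℂ) * (α + 1 / 2) ^ 4
        + ((43 * δ 0 + 7 * δ 1 - 5 / 2 * δ 2 : ℝ) : ℂ) * (α + 1 / 2) ^ 2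
        + ((105 / 8 * δ 0 - 15 / 8 * δ 1 + 9 / 16 * δ 2 : ℝ) : ℂ) := by
  simp only [cbinom, Finset.sum_range_succ, Finset.sum_range_zero, Finset.prod_range_succ,
    Finset.prod_range_zero, Nat.factorial, h3, h4]
  push_cast
  ring

section Coefficients

variable {d₀ d₁ d₂ : ℝ}

theorem ssnn_biquadratic_pos (h₀ : 0 ≤ d₀) (h₁ : 0 ≤ d₁) (hA : 0 < 2 * d₀ + 2 * d₁ + d₂)
    {u : ℝ} (hu : 9 / 4 < u) :
    0 < (2 * d₀ + 2 * d₁ + d₂) * u ^ 2 + (43 * d₀ + 7 * d₁ - 5 / 2 * d₂) * u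
      + (105 / 8 * d₀ - 15 / 8 * d₁ + 9 / 16 * d₂) := by
  have hsplit : (2 * d₀ + 2 * d₁ + d₂) * u ^ 2 + (43 * d₀ + 7 * d₁ - 5 / 2 * d₂) * u
      + (105 / 8 * d₀ - 15 / 8 * d₁ + 9 / 16 * d₂)
      = d₀ * (48 * u + 12) + d₁ * (12 * (u - 1 / 4))
        + (2 * d₀ + 2 * d₁ + d₂) * ((u - 1 / 4) * (u - 9 / 4)) := by ring
  have hq₀ := mul_nonneg h₀ (by linarith : (0 : ℝ) ≤ 48 * u + 12)
  have hq₁ := mul_nonneg h₁ (by linarith : (0 : ℝ) ≤ 12 * (u - 1 / 4))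
  have hq₂ := mul_pos hA
    (mul_pos (by linarith : (0 : ℝ) < u - 1 / 4) (by linarith : (0 : ℝ) < u - 9 / 4))
  linarith

theorem ssnn_discriminant_le (h₀ : 0 ≤ d₀) (h₁ : 0 ≤ d₁) (h₂ : 0 ≤ d₂) :
    4 * (2 * d₀ + 2 * d₁ + d₂) * (105 / 8 * d₀ - 15 / 8 * d₁ + 9 / 16 * d₂)
      ≤ (4 * (2 * d₀ + 2 * d₁ + d₂) * (9 / 4) + (43 * d₀ + 7 * d₁ - 5 / 2 * d₂)) ^ 2 := by
  nlinarith [mul_nonneg h₀ h₁, mul_nonneg h₀ h₂, mul_nonneg h₁ h₂]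

end Coefficients

theorem stmt8 (δ : ℕ → ℝ)
    (hnn : ∀ i ≤ 4, 0 ≤ δ i)
    (hsym : ∀ i ≤ 4, δ i = δ (4 - i))
    (hlead : (∑ i ∈ Finset.range 5, δ i) / (Nat.factorial 4 : ℝ) ≠ 0)
    (α : ℂ)
    (hroot : (∑ i ∈ Finset.range 5, (δ i : ℂ) * cbinom (α + 4 - (i : ℂ)) 4) = 0) :
    -2 ≤ α.re ∧ α.re ≤ 1 := by
  have h3 : δ 3 = δ 1 := hsym 3 (by norm_num)
  have h4 : δ 4 = δ 0 := hsym 4 (by norm_num)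
  have h0 := hnn 0 (by norm_num)
  have h1 := hnn 1 (by norm_num)
  have h2 := hnn 2 (by norm_num)
  have hA : 0 < 2 * δ 0 + 2 * δ 1 + δ 2 := by
    simp only [Finset.sum_range_succ, Finset.sum_range_zero, h3, h4, Nat.factorial] at hlead
    refine lt_of_le_of_ne (by positivity) fun h => hlead ?_
    linear_combination -h / 24
  have hz := sum_mul_cbinom_eq_biquadratic δ h3 h4 α
  rw [hroot, mul_zero, eq_comm] at hz
  have key := re_sq_le_of_biquadratic_eq_zero hA (r := 9 / 4) (by norm_num)
    (fun _ => ssnn_biquadratic_pos h0 h1 hA) (by linarith) (ssnn_discriminant_le h0 h1 h2) hz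
  simp only [Complex.add_re, Complex.div_ofNat_re, Complex.one_re] at key
  constructor <;> nlinarith
end

section
/- Every complex root α of an SSNN polynomial of degree 5 satisfies -2 ≤ Re(α) ≤ 1. -/
open Complex

noncomputable def symQuadratic (a b c : ℝ) (v : ℂ) : ℂ :=
  a * (v ^ 2 + 58 * v + 120) + b * (v ^ 2 + 18 * v) + c * (v ^ 2 - 2 * v)

lemma sum_mul_cbinom_eq_of_symm (δ : ℕ → ℝ) (h5 : δ 5 = δ 0) (h4 : δ 4 = δ 1) (h3 : δ 3 = δ 2)
    (α : ℂ) :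
    ∑ i ∈ Finset.range 6, (δ i : ℂ) * cbinom (α + 5 - (i : ℂ)) 5 =
      (2 * α + 1) * symQuadratic (δ 0) (δ 1) (δ 2) (α ^ 2 + α) / 120 := by
  simp only [Finset.sum_range_succ, Finset.sum_range_zero, cbinom, Finset.prod_range_succ,
    Finset.prod_range_zero, Nat.factorial, symQuadratic, h5, h4, h3]
  push_cast
  ring

lemma le_two_of_real_root {a b c x : ℝ} (ha : 0 ≤ a) (hb : 0 ≤ b) (hS : 0 < a + b + c)
    (hx : a * (x ^ 2 + 58 * x + 120) + b * (x ^ 2 + 18 * x) + c * (x ^ 2 - 2 * x) = 0) :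
    x ≤ 2 := by
  by_contra! h
  have hx0 : 0 < x := by linarith
  nlinarith [mul_pos hS (mul_pos hx0 (sub_pos.mpr h)), mul_nonneg ha hx0.le,
    mul_nonneg hb hx0.le]

lemma sq_add_nine_mul_le_of_conj_roots {a b c x y : ℝ} (ha : 0 ≤ a) (hb : 0 ≤ b) (hc : 0 ≤ c)
    (hS : 0 < a + b + c)
    (hre : (a + b + c) * (x ^ 2 - y ^ 2) + (58 * a + 18 * b - 2 * c) * x + 120 * a = 0)
    (hsum : 2 * (a + b + c) * x + (58 * a + 18 * b - 2 * c) = 0) :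
    y ^ 2 + 9 * x ≤ 18 := by
  have key : 4 * (a + b + c) ^ 2 * (y ^ 2 + 9 * x - 18) =
      -(4000 * a ^ 2 + 720 * b ^ 2 + 40 * c ^ 2 + 3120 * a * b + 440 * a * c + 360 * b * c) := by
    linear_combination (-4 * (a + b + c)) * hre
      + (2 * (a + b + c) * x + 18 * (a + b + c) + (58 * a + 18 * b - 2 * c)) * hsum
  have hneg : 4 * (a + b + c) ^ 2 * (y ^ 2 + 9 * x - 18) ≤ 0 := by
    rw [key]
    nlinarith [mul_nonneg ha hb, mul_nonneg ha hc, mul_nonneg hb hc]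
  nlinarith [pow_pos hS 2]

lemma im_sq_add_nine_mul_re_le_of_symQuadratic_eq_zero {a b c : ℝ} (ha : 0 ≤ a) (hb : 0 ≤ b)
    (hc : 0 ≤ c) (hS : 0 < a + b + c) {v : ℂ} (hv : symQuadratic a b c v = 0) :
    v.im ^ 2 + 9 * v.re ≤ 18 := by
  obtain ⟨x, y⟩ := v
  have hv' := Complex.ext_iff.mp hv
  simp only [symQuadratic, add_re, add_im, sub_re, sub_im, mul_re, mul_im, ofReal_re, ofReal_im,
    re_ofNat, im_ofNat, zero_re, zero_im, pow_two] at hv'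
  obtain ⟨hre, him⟩ := hv'
  have him' : y * (2 * (a + b + c) * x + (58 * a + 18 * b - 2 * c)) = 0 := by
    linear_combination him
  rcases mul_eq_zero.mp him' with hy | hsum
  · subst hy
    have hx := le_two_of_real_root (x := x) ha hb hS (by linear_combination hre)
    dsimp only
    linarith
  · exact sq_add_nine_mul_le_of_conj_roots ha hb hc hS (by linear_combination hre) hsum

lemma im_sq_add_nine_mul_re_sq_add_self (α : ℂ) :
    (α ^ 2 + α).im ^ 2 + 9 * (α ^ 2 + α).re - 18 = (4 * α.im ^ 2 + 9) * (α.re ^ 2 + α.re - 2) := by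
  simp only [add_re, add_im, pow_two, mul_re, mul_im]
  ring

lemma neg_two_le_re_and_re_le_one_of_im_sq_add_nine_mul_re_le {α : ℂ}
    (h : (α ^ 2 + α).im ^ 2 + 9 * (α ^ 2 + α).re ≤ 18) :
    -2 ≤ α.re ∧ α.re ≤ 1 := by
  have hprod : (4 * α.im ^ 2 + 9) * ((α.re + 2) * (α.re - 1)) ≤ 0 := by
    nlinarith [im_sq_add_nine_mul_re_sq_add_self α]
  have hfac : (α.re + 2) * (α.re - 1) ≤ 0 :=
    nonpos_of_mul_nonpos_right hprod (by positivity)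
  constructor <;> nlinarith

theorem stmt9 (δ : ℕ → ℝ)
    (hnn : ∀ i ≤ 5, 0 ≤ δ i)
    (hsym : ∀ i ≤ 5, δ i = δ (5 - i))
    (hlead : (∑ i ∈ Finset.range 6, δ i) / (Nat.factorial 5 : ℝ) ≠ 0)
    (α : ℂ)
    (hroot : (∑ i ∈ Finset.range 6, (δ i : ℂ) * cbinom (α + 5 - (i : ℂ)) 5) = 0) :
    -2 ≤ α.re ∧ α.re ≤ 1 := by
  have h5 : δ 5 = δ 0 := (hsym 0 (by norm_num)).symm
  have h4 : δ 4 = δ 1 := (hsym 1 (by norm_num)).symm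
  have h3 : δ 3 = δ 2 := (hsym 2 (by norm_num)).symm
  have ha := hnn 0 (by norm_num)
  have hb := hnn 1 (by norm_num)
  have hc := hnn 2 (by norm_num)
  have hS : 0 < δ 0 + δ 1 + δ 2 := by
    have hsum : ∑ i ∈ Finset.range 6, δ i = 2 * (δ 0 + δ 1 + δ 2) := by
      simp only [Finset.sum_range_succ, Finset.sum_range_zero, h5, h4, h3]
      ring
    rw [hsum] at hlead
    have hne : δ 0 + δ 1 + δ 2 ≠ 0 := fun h ↦ hlead (by simp [h])
    exact lt_of_le_of_ne (by positivity) hne.symm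
  rw [sum_mul_cbinom_eq_of_symm δ h5 h4 h3, div_eq_zero_iff, mul_eq_zero] at hroot
  rcases hroot with (hcenter | hquad) | h120
  · have hre : 2 * α.re + 1 = 0 := by simpa using congrArg Complex.re hcenter
    constructor <;> linarith
  · exact neg_two_le_re_and_re_le_one_of_im_sq_add_nine_mul_re_le <|
      im_sq_add_nine_mul_re_le_of_symQuadratic_eq_zero ha hb hc hS hquad
  · norm_num at h120
end

section
/- Suppose b, c ≥ 0 satisfy 16b² − 8(c−16)b + c² − 68c + 436 < 0. Then c > 34 − 12√5, and (210 − 30b + 9c)/(2 + 2b + c) < (2√5 + 1)². -/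
theorem stmt11 (b c : ℝ) (hb : 0 ≤ b) (hc : 0 ≤ c)
    (hdisc : 16 * b ^ 2 - 8 * (c - 16) * b + c ^ 2 - 68 * c + 436 < 0) :
    34 - 12 * Real.sqrt 5 < c ∧
      (210 - 30 * b + 9 * c) / (2 + 2 * b + c) < (2 * Real.sqrt 5 + 1) ^ 2 := by
  have hs : Real.sqrt 5 ^ 2 = 5 := Real.sq_sqrt (by norm_num)
  have hs2 : (2 : ℝ) ≤ Real.sqrt 5 := by
    nlinarith [Real.sqrt_nonneg 5]
  have h1 : 34 - 12 * Real.sqrt 5 < c := by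
    by_contra h
    push_neg at h
    have hc16 : c < 16 := by nlinarith
    nlinarith [mul_nonneg hb (le_of_lt (sub_pos.mpr hc16)),
      mul_nonneg (sub_nonneg.mpr h) (by nlinarith : (0:ℝ) ≤ 34 + 12 * Real.sqrt 5 - c),
      sq_nonneg b]
  refine ⟨h1, ?_⟩
  have hden : (0:ℝ) < 2 + 2 * b + c := by linarith
  rw [div_lt_iff₀ hden]
  nlinarith [mul_pos (by nlinarith : (0:ℝ) < 12 + 4 * Real.sqrt 5)
      (sub_pos.mpr h1),
    mul_nonneg (by nlinarith : (0:ℝ) ≤ 72 + 8 * Real.sqrt 5) hb]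
end

section
/- Suppose b, c ≥ 0 satisfy 81b² − 6(3c−67)b + c² − 178c + 721 < 0. Then c > 89 − 60√2, and moreover √((1689−71b+9c)/(1+b+c)) + (−115−35b+5c)/(1+b+c) ≤ 64/7 when c ≤ 89 + 60√2, while (1689−71b+9c)/(1+b+c) < 177 − 112√2 when c > 89 + 60√2. -/
theorem stmt12 (b c : ℝ) (hb : 0 ≤ b) (hc : 0 ≤ c)
    (hdisc : 81 * b ^ 2 - 6 * (3 * c - 67) * b + c ^ 2 - 178 * c + 721 < 0) :
    89 - 60 * Real.sqrt 2 < c ∧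
      (c ≤ 89 + 60 * Real.sqrt 2 →
        Real.sqrt ((1689 - 71 * b + 9 * c) / (1 + b + c)) +
            (-115 - 35 * b + 5 * c) / (1 + b + c) ≤ 64 / 7) ∧
      (89 + 60 * Real.sqrt 2 < c →
        (1689 - 71 * b + 9 * c) / (1 + b + c) < 177 - 112 * Real.sqrt 2) := by
  have hs0 : (0:ℝ) ≤ Real.sqrt 2 := Real.sqrt_nonneg 2
  have hs2 : Real.sqrt 2 ^ 2 = 2 := Real.sq_sqrt (by norm_num)
  have hslb : (1.4 : ℝ) ≤ Real.sqrt 2 := by nlinarith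
  have hsub : Real.sqrt 2 < 1.5 := by nlinarith
  have hu : (0:ℝ) < 1 + b + c := by linarith
  refine ⟨?_, ?_, ?_⟩
  · by_contra h
    push_neg at h
    have hc5 : c ≤ 5 := by nlinarith
    have h89 : 60 * Real.sqrt 2 ≤ 89 - c := by linarith
    have hsq : (60 * Real.sqrt 2) ^ 2 ≤ (89 - c) ^ 2 := by
      apply sq_le_sq' <;> nlinarith
    nlinarith [mul_nonneg hb (by linarith : (0:ℝ) ≤ 67 - 3 * c), sq_nonneg b]
  · intro _
    have hle : Real.sqrt ((1689 - 71 * b + 9 * c) / (1 + b + c)) ≤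
        64 / 7 - (-115 - 35 * b + 5 * c) / (1 + b + c) := by
      rw [Real.sqrt_le_iff]
      constructor
      · rw [sub_nonneg, div_le_iff₀ hu]; nlinarith
      · rw [div_sub_div _ _ (by norm_num : (7:ℝ) ≠ 0) (ne_of_gt hu)] at *
        rw [div_pow, div_le_div_iff₀ hu (by positivity)]
        nlinarith [mul_nonneg hu.le (sq_nonneg (c - 41)),
          mul_nonneg (mul_nonneg hu.le hb) hb,
          mul_nonneg (mul_nonneg hu.le hb) hc,
          mul_nonneg hu.le hb, mul_nonneg hb hc, sq_nonneg (c - 41)]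
    linarith
  · intro h3
    rw [div_lt_iff₀ hu]
    have key : (0:ℝ) < (168 - 112 * Real.sqrt 2) * (c - 89 - 60 * Real.sqrt 2) := by
      apply mul_pos (by nlinarith) (by linarith)
    nlinarith [mul_nonneg hb (by nlinarith : (0:ℝ) ≤ 248 - 112 * Real.sqrt 2)]
end

section
/- For b, c ≥ 0, the polynomial 5!·f(n − 1/2) is divisible by n, where f(n) = binom(n+5,5) + b·binom(n+4,5) + c·binom(n+3,5) + c·binom(n+2,5) + b·binom(n+1,5) + binom(n,5), and the quotient equals 2(1+b+c)n⁴ + 5(23+7b−c)n² + 1689/8 − (71/8)b + (9/8)c. -/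
/-- Polynomial binomial coefficient `binom(x, k) = x(x-1)⋯(x-k+1)/k!` in a real variable. -/
noncomputable def rbinom (x : ℝ) (k : ℕ) : ℝ :=
  (∏ j ∈ Finset.range k, (x - (j : ℝ))) / (k.factorial : ℝ)

theorem stmt13_general (b c : ℝ) (n : ℝ) :
    (Nat.factorial 5 : ℝ) *
        (rbinom (n - 1 / 2 + 5) 5 + b * rbinom (n - 1 / 2 + 4) 5 +
          c * rbinom (n - 1 / 2 + 3) 5 + c * rbinom (n - 1 / 2 + 2) 5 +
          b * rbinom (n - 1 / 2 + 1) 5 + rbinom (n - 1 / 2) 5) =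
      n * (2 * (1 + b + c) * n ^ 4 + 5 * (23 + 7 * b - c) * n ^ 2 +
        (1689 / 8 - (71 / 8) * b + (9 / 8) * c)) := by
  simp only [rbinom, Finset.prod_range_succ, Finset.prod_range_zero, Nat.factorial]
  push_cast
  ring

theorem stmt13 (b c : ℝ) (hb : 0 ≤ b) (hc : 0 ≤ c) (n : ℝ) :
    (Nat.factorial 5 : ℝ) *
        (rbinom (n - 1 / 2 + 5) 5 + b * rbinom (n - 1 / 2 + 4) 5 +
          c * rbinom (n - 1 / 2 + 3) 5 + c * rbinom (n - 1 / 2 + 2) 5 +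
          b * rbinom (n - 1 / 2 + 1) 5 + rbinom (n - 1 / 2) 5) =
      n * (2 * (1 + b + c) * n ^ 4 + 5 * (23 + 7 * b - c) * n ^ 2 +
        (1689 / 8 - (71 / 8) * b + (9 / 8) * c)) :=
  stmt13_general b c n
end

section
/- Let d = 2k be even and a ≥ 2(2k+1)/(2k−1) real. Then the quadratic g(n) = (a+2)n² + (a+2)n + ak(1−k) + 2k² has two real roots, namely −1/2 ± (1/2)√((2k−1)((2k−1)a − 2(2k+1))/(a+2)), both lying in the open interval (−k, k−1). -/
theorem stmt15 (k : ℕ) (hk : 1 ≤ k) (a : ℝ)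
    (ha : 2 * (2 * (k : ℝ) + 1) / (2 * (k : ℝ) - 1) ≤ a) :
    (∀ x : ℝ,
        (a + 2) * x ^ 2 + (a + 2) * x + a * (k : ℝ) * (1 - (k : ℝ)) + 2 * (k : ℝ) ^ 2 = 0 ↔
          x = -(1 / 2) + (1 / 2) *
              Real.sqrt ((2 * (k : ℝ) - 1) * ((2 * (k : ℝ) - 1) * a - 2 * (2 * (k : ℝ) + 1)) /
                (a + 2)) ∨
            x = -(1 / 2) - (1 / 2) *
              Real.sqrt ((2 * (k : ℝ) - 1) * ((2 * (k : ℝ) - 1) * a - 2 * (2 * (k : ℝ) + 1)) /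
                (a + 2))) ∧
      (-(1 / 2) + (1 / 2) *
          Real.sqrt ((2 * (k : ℝ) - 1) * ((2 * (k : ℝ) - 1) * a - 2 * (2 * (k : ℝ) + 1)) /
            (a + 2)) ∈ Set.Ioo (-(k : ℝ)) ((k : ℝ) - 1)) ∧
      (-(1 / 2) - (1 / 2) *
          Real.sqrt ((2 * (k : ℝ) - 1) * ((2 * (k : ℝ) - 1) * a - 2 * (2 * (k : ℝ) + 1)) /
            (a + 2)) ∈ Set.Ioo (-(k : ℝ)) ((k : ℝ) - 1)) := by
  have hK : (1:ℝ) ≤ (k:ℝ) := by exact_mod_cast hk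
  set K := (k:ℝ) with hKdef
  have h1 : (0:ℝ) < 2 * K - 1 := by linarith
  have h2 : 2 * (2 * K + 1) ≤ a * (2 * K - 1) := by
    rw [div_le_iff₀ h1] at ha; linarith
  have ha2 : (0:ℝ) < a + 2 := by nlinarith
  have hnum : (0:ℝ) ≤ (2 * K - 1) * ((2 * K - 1) * a - 2 * (2 * K + 1)) := by nlinarith
  have hDnn : (0:ℝ) ≤ (2 * K - 1) * ((2 * K - 1) * a - 2 * (2 * K + 1)) / (a + 2) :=
    div_nonneg hnum ha2.le
  set s := Real.sqrt ((2 * K - 1) * ((2 * K - 1) * a - 2 * (2 * K + 1)) / (a + 2)) with hsdef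
  have hs0 : 0 ≤ s := Real.sqrt_nonneg _
  have hs2 : s ^ 2 = (2 * K - 1) * ((2 * K - 1) * a - 2 * (2 * K + 1)) / (a + 2) :=
    Real.sq_sqrt hDnn
  have hD : (a + 2) * s ^ 2 = (2 * K - 1) * ((2 * K - 1) * a - 2 * (2 * K + 1)) := by
    rw [hs2]; field_simp
  have factored : ∀ x : ℝ,
      (a + 2) * x ^ 2 + (a + 2) * x + a * K * (1 - K) + 2 * K ^ 2 =
        (a + 2) * ((x - (-(1/2) + (1/2) * s)) * (x - (-(1/2) - (1/2) * s))) := by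
    intro x
    linear_combination (1/4 : ℝ) * hD
  have hslt : s < 2 * K - 1 := by
    rw [hsdef, Real.sqrt_lt' h1, div_lt_iff₀ ha2]
    nlinarith
  refine ⟨fun x => ?_, ⟨by linarith, by linarith⟩, ⟨by linarith, by linarith⟩⟩
  constructor
  · intro h
    rw [factored x] at h
    rcases mul_eq_zero.mp h with h | h
    · linarith
    rcases mul_eq_zero.mp h with h | h
    · exact Or.inl (sub_eq_zero.mp h)
    · exact Or.inr (sub_eq_zero.mp h)
  · rintro (rfl | rfl) <;> rw [factored] <;> ring
end

section
/- Let d = 2k be even with k ≥ 1 and a ≥ 2(2k+1)/(2k−1). Then d!·(binom(n+k+1,d) + a·binom(n+k,d) + binom(n+k−1,d)) = (Π_{j=−k+2}^{k−1}(n+j)) · ((a+2)n² + (a+2)n + ak(1−k) + 2k²) as polynomials in n. -/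
/-!
Each of the three falling factorials of length `2k` is a rising product of `2k` consecutive
terms, and all three contain the `2k - 2` factors `n - k + 2, …, n + k - 1`. Splitting these
off leaves two linear factors per term, and the sum of the three resulting quadratics is the
quadratic on the right.
-/

open Finset

section RisingProduct

variable {R : Type*} [CommRing R]

lemma ascPochhammer_eval_eq_prod_range (s : ℕ) (y : R) :
    (ascPochhammer R s).eval y = ∏ i ∈ range s, (y + i) := by
  induction s with
  | zero => simp
  | succ s ih => rw [ascPochhammer_succ_eval, ih, prod_range_succ]

lemma prod_range_sub_natCast_eq_prod_range_add (s : ℕ) (x : R) :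
    ∏ j ∈ range s, (x - j) = ∏ i ∈ range s, (x - s + 1 + i) := by
  rw [← descPochhammer_eval_eq_prod_range, descPochhammer_eval_eq_ascPochhammer,
    ascPochhammer_eval_eq_prod_range]

lemma prod_range_succ_add_natCast (s : ℕ) (y : R) :
    ∏ i ∈ range (s + 1), (y + i) = y * ∏ i ∈ range s, (y + 1 + i) := by
  rw [prod_range_succ', mul_comm]
  push_cast
  simp only [add_zero, add_assoc, add_comm (1 : R)]

end RisingProduct

lemma Int.prod_Icc_eq_prod_range {M : Type*} [CommMonoid M] (f : ℤ → M) (a : ℤ) (s : ℕ) :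
    ∏ j ∈ Icc a (a + s - 1), f j = ∏ i ∈ Finset.range s, f (a + i) := by
  rw [Int.Icc_eq_finset_map, prod_map, show (a + s - 1 + 1 - a).toNat = s by omega]
  rfl

lemma factorial_mul_rbinom (y : ℝ) (s : ℕ) :
    (s.factorial : ℝ) * rbinom (y + s - 1) s = ∏ i ∈ range s, (y + i) := by
  rw [rbinom, mul_div_cancel₀ _ (by positivity), prod_range_sub_natCast_eq_prod_range_add]
  exact prod_congr rfl fun i _ => by ring

section ThreeConsecutive

variable (y : ℝ) (s : ℕ)

lemma factorial_mul_rbinom_upper :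
    ((s + 2).factorial : ℝ) * rbinom (y + s + 1) (s + 2) =
      (∏ i ∈ range s, (y + i)) * (y + s) * (y + s + 1) := by
  rw [show y + s + 1 = y + (s + 2 : ℕ) - 1 by push_cast; ring, factorial_mul_rbinom,
    prod_range_succ, prod_range_succ]
  push_cast
  ring

lemma factorial_mul_rbinom_middle :
    ((s + 2).factorial : ℝ) * rbinom (y + s) (s + 2) =
      (y - 1) * (∏ i ∈ range s, (y + i)) * (y + s) := by
  rw [show y + s = y - 1 + (s + 2 : ℕ) - 1 by push_cast; ring, factorial_mul_rbinom,
    prod_range_succ, prod_range_succ_add_natCast, sub_add_cancel]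
  push_cast
  ring

lemma factorial_mul_rbinom_lower :
    ((s + 2).factorial : ℝ) * rbinom (y + s - 1) (s + 2) =
      (y - 2) * (y - 1) * ∏ i ∈ range s, (y + i) := by
  rw [show y + s - 1 = y - 1 - 1 + (s + 2 : ℕ) - 1 by push_cast; ring, factorial_mul_rbinom,
    prod_range_succ_add_natCast, sub_add_cancel, prod_range_succ_add_natCast, sub_add_cancel]
  ring

end ThreeConsecutive

theorem stmt16_general (k : ℕ) (hk : 1 ≤ k) (a : ℝ) (n : ℝ) :
    ((2 * k).factorial : ℝ) *
        (rbinom (n + (k : ℝ) + 1) (2 * k) + a * rbinom (n + (k : ℝ)) (2 * k) +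
          rbinom (n + (k : ℝ) - 1) (2 * k)) =
      (∏ j ∈ Finset.Icc (-(k : ℤ) + 2) ((k : ℤ) - 1), (n + (j : ℝ))) *
        ((a + 2) * n ^ 2 + (a + 2) * n + a * (k : ℝ) * (1 - (k : ℝ)) + 2 * (k : ℝ) ^ 2) := by
  obtain ⟨m, rfl⟩ : ∃ m, k = m + 1 := ⟨k - 1, by omega⟩
  set y : ℝ := n - m + 1 with hy
  have hcore : ∏ j ∈ Icc (-((m + 1 : ℕ) : ℤ) + 2) (((m + 1 : ℕ) : ℤ) - 1), (n + (j : ℝ)) =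
      ∏ i ∈ range (2 * m), (y + i) := by
    rw [show ((m + 1 : ℕ) : ℤ) - 1 = (-((m + 1 : ℕ) : ℤ) + 2) + ((2 * m : ℕ) : ℤ) - 1 by
      push_cast; ring, Int.prod_Icc_eq_prod_range]
    exact prod_congr rfl fun i _ => by push_cast; ring
  have hargs : n + (m + 1 : ℕ) = y + (2 * m : ℕ) := by push_cast; ring
  rw [hargs, show 2 * (m + 1) = 2 * m + 2 by ring, mul_add, mul_add, mul_left_comm _ a,
    factorial_mul_rbinom_upper, factorial_mul_rbinom_middle, factorial_mul_rbinom_lower, hcore, hy]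
  push_cast
  ring

theorem stmt16 (k : ℕ) (hk : 1 ≤ k) (a : ℝ)
    (ha : 2 * (2 * (k : ℝ) + 1) / (2 * (k : ℝ) - 1) ≤ a) (n : ℝ) :
    ((2 * k).factorial : ℝ) *
        (rbinom (n + (k : ℝ) + 1) (2 * k) + a * rbinom (n + (k : ℝ)) (2 * k) +
          rbinom (n + (k : ℝ) - 1) (2 * k)) =
      (∏ j ∈ Finset.Icc (-(k : ℤ) + 2) ((k : ℤ) - 1), (n + (j : ℝ))) *
        ((a + 2) * n ^ 2 + (a + 2) * n + a * (k : ℝ) * (1 - (k : ℝ)) + 2 * (k : ℝ) ^ 2) :=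
  stmt16_general k hk a n
end

section
/- The polynomial f(n) = binom(n+8,8) + 14·binom(n+4,8) + binom(n,8) is an SSNN polynomial of degree 8 that has a complex root α with Re(α) > 3; in particular, f has a root whose real part lies outside the interval [−4, 3]. -/
/-! Substituting `n = x - 1/2` turns `f` into an even polynomial, `645120 f(x - 1/2) = Q(x²)` for a
quartic `Q`. By the intermediate value theorem `Q` has real roots `r₁ ≈ -3.1945`, `r₂ ≈ -0.1975`;
dividing them off leaves a quadratic with negative discriminant, whose root `u` satisfies
`‖u‖ + Re u > 49/2`. The square root `w` of `u` with `Re w ≥ 0` has `(Re w)² = (‖u‖ + Re u)/2`,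
so `Re w > 7/2` and `α = w - 1/2` is a root of `f` with `Re α > 3`. -/

open Complex Set

lemma cbinom_eight (x : ℂ) :
    cbinom x 8 = x * (x - 1) * (x - 2) * (x - 3) * (x - 4) * (x - 5) * (x - 6) * (x - 7) / 40320 := by
  simp only [cbinom, Finset.prod_range_succ, Finset.prod_range_zero]
  norm_num [Nat.factorial]

def quartic {R : Type*} [CommRing R] (u : R) : R :=
  256 * u ^ 4 + 8960 * u ^ 3 + 443744 * u ^ 2 + 1416880 * u + 263025

@[simp, norm_cast]
lemma ofReal_quartic (r : ℝ) : ((quartic r : ℝ) : ℂ) = quartic (r : ℂ) := by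
  simp [quartic]

lemma continuous_quartic : Continuous (quartic : ℝ → ℝ) := by
  unfold quartic
  fun_prop

lemma cbinom_sum_sub_half (x : ℂ) :
    cbinom (x - 1 / 2 + 8) 8 + 14 * cbinom (x - 1 / 2 + 4) 8 + cbinom (x - 1 / 2) 8
      = quartic (x ^ 2) / 645120 := by
  simp only [cbinom_eight, quartic]
  ring

lemma exists_quartic_eq_zero_mem_Icc {a b : ℝ} (hab : a ≤ b) (hsign : quartic a * quartic b ≤ 0) :
    ∃ r ∈ Icc a b, quartic r = 0 := by
  rcases mul_nonpos_iff.mp hsign with ⟨ha, hb⟩ | ⟨ha, hb⟩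
  · exact intermediate_value_Icc' hab continuous_quartic.continuousOn ⟨hb, ha⟩
  · exact intermediate_value_Icc hab continuous_quartic.continuousOn ⟨ha, hb⟩

/-- Removing two roots `r₁ ≠ r₂` leaves this quadratic cofactor. -/
lemma quartic_eq_zero_of_cofactor {R : Type*} [CommRing R] [IsDomain R] {r₁ r₂ u : R}
    (h₁ : quartic r₁ = 0) (h₂ : quartic r₂ = 0) (hne : r₁ ≠ r₂)
    (hu : 256 * u ^ 2 + (8960 + 256 * (r₁ + r₂)) * u
      + (443744 + 8960 * (r₁ + r₂) + 256 * (r₁ ^ 2 + r₁ * r₂ + r₂ ^ 2)) = 0) :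
    quartic u = 0 := by
  have hcubic : 256 * r₂ ^ 3 + (8960 + 256 * r₁) * r₂ ^ 2 + (443744 + 8960 * r₁ + 256 * r₁ ^ 2) * r₂
      + (1416880 + 443744 * r₁ + 8960 * r₁ ^ 2 + 256 * r₁ ^ 3) = 0 := by
    refine (mul_eq_zero.mp ?_).resolve_left (sub_ne_zero.mpr hne.symm)
    unfold quartic at h₁ h₂
    linear_combination h₂ - h₁
  unfold quartic at h₁ ⊢
  linear_combination (u - r₁) * (u - r₂) * hu + (u - r₁) * hcubic + h₁

lemma exists_quadratic_root {a b c : ℝ} (ha : 0 < a) (hdisc : discrim a b c < 0) :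
    ∃ u : ℂ, a * u ^ 2 + b * u + c = 0 ∧ 2 * a * u.re = -b ∧ a * ‖u‖ ^ 2 = c := by
  obtain ⟨x, hx⟩ : ∃ x : ℝ, 2 * a * x = -b := ⟨-b / (2 * a), by field_simp⟩
  obtain ⟨y, hy⟩ : ∃ y : ℝ, (2 * a * y) ^ 2 = 4 * a * c - b ^ 2 :=
    ⟨√(-discrim a b c) / (2 * a), by
      rw [mul_div_cancel₀ _ (by positivity), Real.sq_sqrt (neg_nonneg.mpr hdisc.le), discrim]
      ring⟩
  have h4a : 4 * a ≠ 0 := by positivity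
  refine ⟨x + y * I, ?_, by simpa using hx, ?_⟩
  · have hre : a * (x ^ 2 - y ^ 2) + b * x + c = 0 :=
      (mul_eq_zero.mp (by linear_combination (2 * a * x + b) * hx - hy)).resolve_left h4a
    have hreC := congrArg ((↑) : ℝ → ℂ) hre
    have hxC := congrArg ((↑) : ℝ → ℂ) hx
    push_cast at hreC hxC
    linear_combination hreC + (y : ℂ) * I * hxC + a * (y : ℂ) ^ 2 * I_sq
  · rw [Complex.sq_norm, Complex.normSq_add_mul_I, ← sub_eq_zero]
    exact (mul_eq_zero.mp (by linear_combination (2 * a * x - b) * hx + hy)).resolve_left h4a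

lemma exists_sq_eq_re_nonneg (u : ℂ) :
    ∃ w : ℂ, w ^ 2 = u ∧ 0 ≤ w.re ∧ w.re ^ 2 = (‖u‖ + u.re) / 2 := by
  obtain ⟨z, hz⟩ : ∃ z : ℂ, z ^ 2 = u := IsAlgClosed.exists_pow_nat_eq u two_pos
  have hre_sq : ∀ w : ℂ, w ^ 2 = u → w.re ^ 2 = (‖u‖ + u.re) / 2 := by
    rintro w rfl
    rw [Complex.norm_pow, Complex.sq_norm, Complex.normSq_apply, sq w, Complex.mul_re]
    ring
  rcases le_total 0 z.re with hre | hre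
  · exact ⟨z, hz, hre, hre_sq z hz⟩
  · have hz' : (-z) ^ 2 = u := by rw [neg_sq, hz]
    exact ⟨-z, hz', by simpa using hre, hre_sq _ hz'⟩

lemma cofactor_bound {r₁ r₂ : ℝ} (h₁ : r₁ ∈ Icc (-3.195) (-3.194)) (h₂ : r₂ ∈ Icc (-0.198) (-0.197)) :
    (49 / 2 + (8960 + 256 * (r₁ + r₂)) / 512) ^ 2
      < (443744 + 8960 * (r₁ + r₂) + 256 * (r₁ ^ 2 + r₁ * r₂ + r₂ ^ 2)) / 256 := by
  obtain ⟨hl₁, hu₁⟩ := h₁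
  obtain ⟨hl₂, hu₂⟩ := h₂
  nlinarith [mul_nonneg (sub_nonneg.mpr hl₁) (sub_nonneg.mpr hu₁),
    mul_nonneg (sub_nonneg.mpr hl₂) (sub_nonneg.mpr hu₂),
    mul_nonneg (sub_nonneg.mpr hl₁) (sub_nonneg.mpr hl₂),
    mul_nonneg (sub_nonneg.mpr hu₁) (sub_nonneg.mpr hu₂)]

theorem stmt19 :
    ∃ α : ℂ,
      cbinom (α + 8) 8 + 14 * cbinom (α + 4) 8 + cbinom α 8 = 0 ∧
        3 < α.re ∧ ¬(-4 ≤ α.re ∧ α.re ≤ 3) := by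
  obtain ⟨r₁, hr₁, h₁⟩ := exists_quartic_eq_zero_mem_Icc (a := -3.195) (b := -3.194)
    (by norm_num) (by norm_num [quartic])
  obtain ⟨r₂, hr₂, h₂⟩ := exists_quartic_eq_zero_mem_Icc (a := -0.198) (b := -0.197)
    (by norm_num) (by norm_num [quartic])
  set b := 8960 + 256 * (r₁ + r₂)
  set c := 443744 + 8960 * (r₁ + r₂) + 256 * (r₁ ^ 2 + r₁ * r₂ + r₂ ^ 2)
  have hbound : (49 / 2 + b / 512) ^ 2 < c / 256 := cofactor_bound hr₁ hr₂
  have hb : 0 < b := by linarith [hr₁.1, hr₂.1]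
  obtain ⟨u, hu, hre, hnorm⟩ := exists_quadratic_root (a := 256) (b := b) (c := c) (by norm_num)
    (by rw [discrim]; nlinarith)
  obtain ⟨w, rfl, hw₀, hw⟩ := exists_sq_eq_re_nonneg u
  have hroot : quartic (w ^ 2) = 0 := by
    refine quartic_eq_zero_of_cofactor (r₁ := (r₁ : ℂ)) (r₂ := r₂) ?_ ?_ ?_ ?_
    · exact_mod_cast h₁
    · exact_mod_cast h₂
    · exact_mod_cast (by linarith [hr₁.2, hr₂.1] : r₁ ≠ r₂)
    · simpa [b, c] using hu
  have hnorm_gt : 49 / 2 + b / 512 < ‖w ^ 2‖ :=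
    lt_of_pow_lt_pow_left₀ 2 (norm_nonneg _) (by linarith)
  have hwre : 7 / 2 < w.re := lt_of_pow_lt_pow_left₀ 2 hw₀ (by linarith)
  have hαre : (w - 1 / 2).re = w.re - 1 / 2 := by simp
  refine ⟨w - 1 / 2, ?_, ?_, ?_⟩
  · rw [cbinom_sum_sub_half, hroot, zero_div]
  · linarith
  · rintro ⟨-, h⟩
    linarith
end
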